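/- arXiv:1607.05870 — 4 statements merged into one kernel-verified Lean document; each statement's English description precedes it below -/
import Mathlib

section
/- Let A₁, ..., Aₙ be pairwise commuting self-adjoint operators on a complex Hilbert space with each Aᵢ² = 1 and with A₁⋯Aₙ = (-1)^b·1. Fix i and α ∈ {-1,+1}. Then (1 + α·Aᵢ)/2 + ∑_{β : ∏ⱼβ(j)=(-1)^b, β(i)=-α} ∏ⱼ (1 + β(j)·Aⱼ)/2 = 1. -/
/-!
The commuting involutions `A j` generate a commutative subalgebra, in which `P_j^± = (1 ± A_j)/2`
are complementary orthogonal idempotents with `P_j^± A_j = ±P_j^±`. Expanding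
`∏_j (P_j^+ + P_j^-) = 1` gives `∑_β P_β = 1` for `P_β = ∏_j P_j^{β j}`, and multiplying this by
`P_i^s` shows that the `P_β` with `β i = s` sum to `P_i^s`. A `P_β` of the wrong parity vanishes,
since `P_β A_1 ⋯ A_n` is both `(∏_j β j) P_β` and `(-1)^b P_β`. Hence the sum in question is
`P_i^{-α} = 1 - P_i^α`.
-/

open Finset

namespace SignProjection

section Ring

variable (K : Type*) {R S : Type*} [Field K] [Ring R] [Algebra K R] [Ring S] [Algebra K S]

def boolSign (s : Bool) : K := if s then 1 else -1

def signProj (a : R) (s : Bool) : R := (2 : K)⁻¹ • (1 + boolSign K s • a)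

variable {K}

theorem map_signProj (f : R →ₐ[K] S) (a : R) (s : Bool) :
    f (signProj K a s) = signProj K (f a) s := by
  simp only [signProj, map_smul, map_add, map_one]

theorem signProj_true_add_signProj_false [NeZero (2 : K)] (a : R) :
    signProj K a true + signProj K a false = 1 := by
  have h2 : (2 : K)⁻¹ * 2 = 1 := inv_mul_cancel₀ two_ne_zero
  simp only [signProj, boolSign, if_true, Bool.false_eq_true, if_false, one_smul, neg_smul]
  linear_combination (norm := module) h2 • (1 : R)

theorem signProj_mul_signProj [NeZero (2 : K)] {a : R} (ha : a * a = 1) (s t : Bool) :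
    signProj K a s * signProj K a t = if s = t then signProj K a s else 0 := by
  have h2 : (2 : K)⁻¹ * 2 = 1 := inv_mul_cancel₀ two_ne_zero
  cases s <;> cases t <;> simp only [signProj, boolSign, if_true, Bool.false_eq_true, if_false,
    one_smul, neg_smul, smul_mul_smul_comm, add_mul, mul_add, one_mul, mul_one, neg_mul, mul_neg,
    ha, reduceCtorEq]
  · linear_combination (norm := module) ((2 : K)⁻¹ * h2) • (1 - a : R)
  · module
  · module
  · linear_combination (norm := module) ((2 : K)⁻¹ * h2) • (1 + a : R)

theorem signProj_mul_self {a : R} (ha : a * a = 1) (s : Bool) :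
    signProj K a s * a = boolSign K s • signProj K a s := by
  cases s <;> simp only [signProj, boolSign, if_true, Bool.false_eq_true, if_false,
    one_smul, neg_smul, smul_mul_assoc, add_mul, one_mul, neg_mul, ha] <;> module

end Ring

section CommRing

variable {K R : Type*} [Field K] [CommRing R] [Algebra K R]

variable (K) in
def jointProj {ι : Type*} [Fintype ι] (a : ι → R) (β : ι → Bool) : R :=
  ∏ j, signProj K (a j) (β j)

variable {ι : Type*} [Fintype ι] {a : ι → R}

theorem sum_jointProj [DecidableEq ι] [NeZero (2 : K)] (a : ι → R) :
    ∑ β, jointProj K a β = 1 := by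
  unfold jointProj
  rw [← Fintype.prod_sum]
  simp only [Fintype.sum_bool, signProj_true_add_signProj_false, prod_const_one]

theorem jointProj_mul_prod (ha : ∀ j, a j * a j = 1) (β : ι → Bool) :
    jointProj K a β * ∏ j, a j = (∏ j, boolSign K (β j)) • jointProj K a β := by
  simp only [jointProj, ← prod_mul_distrib, signProj_mul_self (ha _), prod_smul]

theorem jointProj_eq_zero_of_prod_boolSign_ne (ha : ∀ j, a j * a j = 1) {c : K}
    (hprod : ∏ j, a j = c • 1) {β : ι → Bool} (hβ : ∏ j, boolSign K (β j) ≠ c) :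
    jointProj K a β = 0 := by
  have h := jointProj_mul_prod (K := K) ha β
  rw [hprod, mul_smul_comm, mul_one, ← sub_eq_zero, ← sub_smul] at h
  exact (smul_eq_zero.mp h).resolve_left (sub_ne_zero.mpr hβ.symm)

theorem sum_jointProj_filter_apply_eq [DecidableEq ι] [NeZero (2 : K)]
    (ha : ∀ j, a j * a j = 1) (i : ι) (s : Bool) :
    ∑ β ∈ univ.filter (· i = s), jointProj K a β = signProj K (a i) s := by
  have hmul (β : ι → Bool) :
      signProj K (a i) s * jointProj K a β = if β i = s then jointProj K a β else 0 := by
    rw [jointProj, ← mul_prod_erase univ _ (mem_univ i), ← mul_assoc,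
      signProj_mul_signProj (ha i)]
    split_ifs <;> simp_all [eq_comm]
  calc ∑ β ∈ univ.filter (· i = s), jointProj K a β
      = ∑ β, signProj K (a i) s * jointProj K a β := by simp only [sum_filter, hmul]
    _ = signProj K (a i) s := by rw [← mul_sum, sum_jointProj, mul_one]

theorem signProj_add_sum_jointProj_of_prod_eq [DecidableEq ι] [NeZero (2 : K)] [DecidableEq K]
    (ha : ∀ j, a j * a j = 1) {c : K} (hprod : ∏ j, a j = c • 1) (i : ι) (α : Bool) :
    signProj K (a i) α + ∑ β ∈ univ.filter (fun β => ∏ j, boolSign K (β j) = c ∧ β i = !α),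
      jointProj K a β = 1 := by
  have hparity : ∑ β ∈ univ.filter (fun β => ∏ j, boolSign K (β j) = c ∧ β i = !α),
      jointProj K a β = ∑ β ∈ univ.filter (· i = !α), jointProj K a β := by
    refine sum_subset (fun β ↦ by simp +contextual) fun β hβ hβc ↦ ?_
    simp only [mem_filter, mem_univ, true_and] at hβ hβc
    exact jointProj_eq_zero_of_prod_boolSign_ne ha hprod fun h ↦ hβc ⟨h, hβ⟩
  rw [hparity, sum_jointProj_filter_apply_eq ha]
  cases α
  · exact (add_comm _ _).trans (signProj_true_add_signProj_false _)
  · exact signProj_true_add_signProj_false _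

end CommRing

open scoped IsMulCommutative in
theorem signProj_add_sum_prod_signProj_of_commute {K S : Type*} [Field K] [NeZero (2 : K)]
    [DecidableEq K] [Ring S] [Algebra K S] {n : ℕ} (A : Fin n → S)
    (hsq : ∀ j, A j * A j = 1) (hcomm : ∀ j k, A j * A k = A k * A j) {c : K}
    (hprod : ((List.finRange n).map A).prod = c • 1) (i : Fin n) (α : Bool) :
    signProj K (A i) α +
      ∑ β ∈ univ.filter (fun β : Fin n → Bool => ∏ j, boolSign K (β j) = c ∧ β i = !α),
        ((List.finRange n).map fun j => signProj K (A j) (β j)).prod = 1 := by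
  let T := Algebra.adjoin K (Set.range A)
  have : IsMulCommutative T := Algebra.isMulCommutative_adjoin K <| by
    rintro _ ⟨j, rfl⟩ _ ⟨k, rfl⟩
    exact hcomm j k
  let a (j : Fin n) : T := ⟨A j, Algebra.subset_adjoin ⟨j, rfl⟩⟩
  have hval_prod (f : Fin n → T) :
      T.val (∏ j, f j) = ((List.finRange n).map (T.val ∘ f)).prod := by
    rw [Fin.prod_univ_def, map_list_prod, List.map_map]
  have hprod' : ∏ j, a j = c • 1 := Subtype.ext <| (hval_prod a).trans hprod
  have key := congrArg T.val <| signProj_add_sum_jointProj_of_prod_eq (K := K)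
    (fun j ↦ Subtype.ext (hsq j)) hprod' i α
  simp only [map_add, map_sum, map_one, jointProj, hval_prod, Function.comp_def,
    map_signProj] at key
  exact key

end SignProjection

open ContinuousLinearMap in
theorem measurement_protocol_partition_of_unity_general
    {H : Type*} [NormedAddCommGroup H] [InnerProductSpace ℂ H]
    {n : ℕ} (A : Fin n → (H →L[ℂ] H)) (b : ℕ)
    (hsq : ∀ j, A j * A j = 1)
    (hcomm : ∀ j k, A j * A k = A k * A j)
    (hprod : ((List.finRange n).map A).prod = ((-1 : ℂ) ^ b) • 1)
    (i : Fin n) (α : Bool) :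
    (2 : ℂ)⁻¹ • (1 + (if α then (1 : ℂ) else -1) • A i) +
      ∑ β ∈ Finset.univ.filter
          (fun β : Fin n → Bool =>
            (∏ j, (if β j then (1 : ℂ) else -1)) = (-1 : ℂ) ^ b ∧ β i = !α),
        ((List.finRange n).map
            (fun j => (2 : ℂ)⁻¹ • (1 + (if β j then (1 : ℂ) else -1) • A j))).prod = 1 :=
  SignProjection.signProj_add_sum_prod_signProj_of_commute A hsq hcomm hprod i α

open ContinuousLinearMap in
/-- Partition-of-unity relation for the measurement-protocol hyperedges: for pairwise
commuting self-adjoint involutions `A j` with `A 1 ⋯ A n = (-1)^b • 1`, for fixed `i` and a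
sign `α`, the projection `(1 + α • A i)/2` together with the projections `P_β` over all sign
functions `β` of correct parity `∏ j, β j = (-1)^b` with `β i = -α` sums to the identity.
Signs are encoded by `Bool` with `true ↦ +1`, `false ↦ -1`, so `β i = -α` reads `β i = !α`. -/
theorem measurement_protocol_partition_of_unity
    {H : Type*} [NormedAddCommGroup H] [InnerProductSpace ℂ H] [CompleteSpace H]
    {n : ℕ} (A : Fin n → (H →L[ℂ] H)) (b : ℕ) (hb : b = 0 ∨ b = 1)
    (hsa : ∀ j, adjoint (A j) = A j)
    (hsq : ∀ j, A j * A j = 1)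
    (hcomm : ∀ j k, A j * A k = A k * A j)
    (hprod : ((List.finRange n).map A).prod = ((-1 : ℂ) ^ b) • 1)
    (i : Fin n) (α : Bool) :
    (2 : ℂ)⁻¹ • (1 + (if α then (1 : ℂ) else -1) • A i) +
      ∑ β ∈ Finset.univ.filter
          (fun β : Fin n → Bool =>
            (∏ j, (if β j then (1 : ℂ) else -1)) = (-1 : ℂ) ^ b ∧ β i = !α),
        ((List.finRange n).map
            (fun j => (2 : ℂ)⁻¹ • (1 + (if β j then (1 : ℂ) else -1) • A j))).prod = 1 :=
  measurement_protocol_partition_of_unity_general A b hsq hcomm hprod i α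
end

section
/- On the complex Hilbert space ℂ² ⊗ ℂ² (equivalently ℂ⁴), there exist nine self-adjoint unitary operators A_{rc} (r, c ∈ {1,2,3}) with A_{rc}² = 1, such that operators in the same row commute and operators in the same column commute, each row product A_{r1}A_{r2}A_{r3} = 1, each of the first two column products A_{1c}A_{2c}A_{3c} = 1 for c ∈ {1,2}, and the third column product A_{13}A_{23}A_{33} = -1. -/
/-!
Take the square of two-qubit Pauli operators
`Z⊗1, 1⊗Z, Z⊗Z / 1⊗X, X⊗1, X⊗X / Z⊗X, X⊗Z, Y⊗Y`.
Each entry is a tensor product of Hermitian involutions, hence a Hermitian involution, and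
a product of tensor products is computed factorwise.  The only products of Pauli matrices that
do not collapse to `1` are `ZXY = i` and `XZY = -i`, which give `i·(-i) = 1` for the last row and
`i·i = -1` for the last column.

Commutation comes for free: if involutions satisfy `abc = ε` with `ε = ±1`, then `ab = εc` is
an involution, so it equals its inverse `ba`.
-/

open Matrix Complex
open scoped Kronecker

section Involution

variable {M : Type*} [Monoid M] {a b c z : M}

theorem mul_mul_eq_of_mul_mul_eq_central (ha : a * a = 1) (hz : ∀ x, Commute z x)
    (h : a * b * c = z) : b * c * a = z :=
  calc b * c * a = a * (a * b * c) * a := by simp only [mul_assoc, ← mul_assoc a a, ha, one_mul]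
    _ = z := by rw [h, ← (hz a).eq, mul_assoc, ha, mul_one]

theorem commute_of_mul_mul_eq_central (ha : a * a = 1) (hb : b * b = 1) (hc : c * c = 1)
    (hz : ∀ x, Commute z x) (hzz : z * z = 1) (h : a * b * c = z) : Commute a b := by
  have hab : a * b = z * c :=
    calc a * b = a * b * c * c := by rw [mul_assoc _ c, hc, mul_one]
      _ = z * c := by rw [h]
  have hzc : z * c * (z * c) = 1 := by
    rw [mul_assoc, ← mul_assoc c, ← (hz c).eq, mul_assoc z c, hc, mul_one, hzz]
  have hba : b * a * (a * b) = 1 := by rw [mul_assoc, ← mul_assoc a, ha, one_mul, hb]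
  calc a * b = b * a * (a * b) * (z * c) := by rw [hba, one_mul, hab]
    _ = b * a := by rw [hab, mul_assoc, hzc, mul_one]

theorem commute_of_mul_mul_eq_central_fin_three {v : Fin 3 → M} (hv : ∀ i, v i * v i = 1)
    (hz : ∀ x, Commute z x) (hzz : z * z = 1) (h : v 0 * v 1 * v 2 = z) (i j : Fin 3) :
    Commute (v i) (v j) := by
  have h₁ := mul_mul_eq_of_mul_mul_eq_central (hv 0) hz h
  have h₂ := mul_mul_eq_of_mul_mul_eq_central (hv 1) hz h₁
  have c₀₁ := commute_of_mul_mul_eq_central (hv 0) (hv 1) (hv 2) hz hzz h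
  have c₁₂ := commute_of_mul_mul_eq_central (hv 1) (hv 2) (hv 0) hz hzz h₁
  have c₂₀ := commute_of_mul_mul_eq_central (hv 2) (hv 0) (hv 1) hz hzz h₂
  fin_cases i <;> fin_cases j <;> simp [c₀₁, c₁₂, c₂₀, c₀₁.symm, c₁₂.symm, c₂₀.symm]

end Involution

structure IsMerminPeresSquare {R : Type*} [Ring R] [Star R] (A : Fin 3 → Fin 3 → R) : Prop where
  isSelfAdjoint : ∀ r c, IsSelfAdjoint (A r c)
  mul_self : ∀ r c, A r c * A r c = 1
  row_prod : ∀ r, A r 0 * A r 1 * A r 2 = 1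
  col_prod : ∀ c, c ≠ 2 → A 0 c * A 1 c * A 2 c = 1
  col_prod_two : A 0 2 * A 1 2 * A 2 2 = -1

namespace IsMerminPeresSquare

variable {R : Type*} [Ring R] [Star R] {A : Fin 3 → Fin 3 → R}

theorem row_commute (h : IsMerminPeresSquare A) (r c c' : Fin 3) :
    Commute (A r c) (A r c') :=
  commute_of_mul_mul_eq_central_fin_three (h.mul_self r) Commute.one_left (one_mul 1)
    (h.row_prod r) c c'

theorem col_commute (h : IsMerminPeresSquare A) (r r' c : Fin 3) :
    Commute (A r c) (A r' c) := by
  by_cases hc : c = 2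
  · subst hc
    exact commute_of_mul_mul_eq_central_fin_three (v := (A · 2)) (h.mul_self · 2)
      Commute.neg_one_left (by rw [neg_one_mul, neg_neg]) h.col_prod_two r r'
  · exact commute_of_mul_mul_eq_central_fin_three (v := (A · c)) (h.mul_self · c)
      Commute.one_left (one_mul 1) (h.col_prod c hc) r r'

theorem map {S F : Type*} [Ring S] [Star S] [FunLike F R S] [RingHomClass F R S]
    (h : IsMerminPeresSquare A) (f : F) (hf : ∀ x, f (star x) = star (f x)) :
    IsMerminPeresSquare fun r c => f (A r c) where
  isSelfAdjoint r c := by rw [IsSelfAdjoint, ← hf, h.isSelfAdjoint r c]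
  mul_self r c := by rw [← map_mul, h.mul_self, map_one]
  row_prod r := by rw [← map_mul, ← map_mul, h.row_prod, map_one]
  col_prod c hc := by rw [← map_mul, ← map_mul, h.col_prod c hc, map_one]
  col_prod_two := by rw [← map_mul, ← map_mul, h.col_prod_two, map_neg, map_one]

end IsMerminPeresSquare

def pauli : Fin 4 → Matrix (Fin 2) (Fin 2) ℂ :=
  ![1, !![0, 1; 1, 0], !![0, -I; I, 0], !![1, 0; 0, -1]]

@[simp]
theorem pauli_zero : pauli 0 = 1 := rfl

theorem pauli_isHermitian (i : Fin 4) : (pauli i).IsHermitian := by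
  fin_cases i <;> ext j k <;> fin_cases j <;> fin_cases k <;> simp [pauli]

theorem pauli_mul_self (i : Fin 4) : pauli i * pauli i = 1 := by
  fin_cases i <;> simp [pauli, one_fin_two]

theorem pauli_three_mul_pauli_one_mul_pauli_two : pauli 3 * pauli 1 * pauli 2 = I • 1 := by
  ext j k; fin_cases j <;> fin_cases k <;> simp [pauli]

theorem pauli_one_mul_pauli_three_mul_pauli_two : pauli 1 * pauli 3 * pauli 2 = -I • 1 := by
  ext j k; fin_cases j <;> fin_cases k <;> simp [pauli]

-- `(i, j)` encodes `pauli i ⊗ pauli j`, where `pauli = (1, X, Y, Z)`.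
def magicLabel : Fin 3 → Fin 3 → Fin 4 × Fin 4 :=
  ![![(3, 0), (0, 3), (3, 3)], ![(0, 1), (1, 0), (1, 1)], ![(3, 1), (1, 3), (2, 2)]]

def pauliSquare (r c : Fin 3) : Matrix (Fin 2 × Fin 2) (Fin 2 × Fin 2) ℂ :=
  pauli (magicLabel r c).1 ⊗ₖ pauli (magicLabel r c).2

theorem pauliSquare_isHermitian (r c : Fin 3) : (pauliSquare r c).IsHermitian := by
  rw [IsHermitian, pauliSquare, conjTranspose_kronecker, pauli_isHermitian, pauli_isHermitian]

theorem pauliSquare_mul_self (r c : Fin 3) : pauliSquare r c * pauliSquare r c = 1 := by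
  rw [pauliSquare, ← mul_kronecker_mul, pauli_mul_self, pauli_mul_self, one_kronecker_one]

theorem pauliSquare_row_prod (r : Fin 3) :
    pauliSquare r 0 * pauliSquare r 1 * pauliSquare r 2 = 1 := by
  fin_cases r <;> simp [pauliSquare, magicLabel, ← mul_kronecker_mul, pauli_mul_self,
    pauli_three_mul_pauli_one_mul_pauli_two, pauli_one_mul_pauli_three_mul_pauli_two,
    smul_kronecker, kronecker_smul, smul_smul, -neg_smul]

theorem pauliSquare_col_prod (c : Fin 3) (hc : c ≠ 2) :
    pauliSquare 0 c * pauliSquare 1 c * pauliSquare 2 c = 1 := by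
  fin_cases c <;> simp_all [pauliSquare, magicLabel, ← mul_kronecker_mul, pauli_mul_self]

theorem pauliSquare_col_prod_two :
    pauliSquare 0 2 * pauliSquare 1 2 * pauliSquare 2 2 = -1 := by
  simp [pauliSquare, magicLabel, ← mul_kronecker_mul, pauli_three_mul_pauli_one_mul_pauli_two,
    smul_kronecker, kronecker_smul, smul_smul]

theorem isMerminPeresSquare_pauliSquare : IsMerminPeresSquare pauliSquare where
  isSelfAdjoint := pauliSquare_isHermitian
  mul_self := pauliSquare_mul_self
  row_prod := pauliSquare_row_prod
  col_prod := pauliSquare_col_prod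
  col_prod_two := pauliSquare_col_prod_two

open ContinuousLinearMap in
/-- The Mermin–Peres magic square: on the 4-dimensional complex Hilbert space `ℂ² ⊗ ℂ² ≅ ℂ⁴`
there exist nine self-adjoint unitaries `A r c` (`r, c ∈ {0,1,2}`) squaring to `1`, commuting
along rows and columns, with all three row products and the first two column products equal
to `1` and the third column product equal to `-1`. -/
theorem mermin_peres_magic_square :
    ∃ A : Fin 3 → Fin 3 → (EuclideanSpace ℂ (Fin 4) →L[ℂ] EuclideanSpace ℂ (Fin 4)),
      (∀ r c, adjoint (A r c) = A r c) ∧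
      (∀ r c, A r c * A r c = 1) ∧
      (∀ r c c', A r c * A r c' = A r c' * A r c) ∧
      (∀ r r' c, A r c * A r' c = A r' c * A r c) ∧
      (∀ r, A r 0 * A r 1 * A r 2 = 1) ∧
      (∀ c, c ≠ 2 → A 0 c * A 1 c * A 2 c = 1) ∧
      A 0 2 * A 1 2 * A 2 2 = -1 := by
  have h := (isMerminPeresSquare_pauliSquare.map (reindexAlgEquiv ℂ ℂ finProdFinEquiv)
    fun M => (conjTranspose_reindex _ _ M).symm).map (toEuclideanCLM (𝕜 := ℂ)) (map_star _)
  refine ⟨_, fun r c => ?_, h.mul_self, h.row_commute, h.col_commute, h.row_prod, h.col_prod,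
    h.col_prod_two⟩
  rw [← star_eq_adjoint]
  exact h.isSelfAdjoint r c
end

section
/- If a linear system Mx = b over ℤ₂ has a quantum solution A₁,...,Aₙ on some Hilbert space H, and all the operators Aᵢ pairwise commute (not just those within common equations), then the linear system has a classical solution x ∈ ℤ₂ⁿ, provided H ≠ 0. -/
open ContinuousLinearMap in
/-- A quantum solution of the linear system `M x = b` over `ℤ₂` on the Hilbert space `H`. -/
def IsQuantumSolution {H : Type*} [NormedAddCommGroup H] [InnerProductSpace ℂ H]
    [CompleteSpace H] {m n : ℕ} (M : Fin m → Fin n → ZMod 2) (b : Fin m → ZMod 2)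
    (A : Fin n → (H →L[ℂ] H)) : Prop :=
  (∀ i, adjoint (A i) = A i) ∧
  (∀ i, A i * A i = 1) ∧
  (∀ r i j, M r i = 1 → M r j = 1 → A i * A j = A j * A i) ∧
  (∀ r, (((List.finRange n).filter (fun i => M r i = 1)).map A).prod
          = ((-1 : ℂ) ^ (b r).val) • 1)

/-!
Commuting involutions have a common eigenvector: if `w` is a common eigenvector of some of them
and `T` is one more, then either `T w = -w`, or `w + T w` is a nonzero `+1`-eigenvector of `T`,
which is still an eigenvector, with the same eigenvalues, of every operator commuting with `T`.
Writing the eigenvalue of `Aᵢ` on such a vector as `(-1) ^ xᵢ` and applying the equation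
`A_{k₁} ⋯ A_{k_r} = (-1) ^ b • 1` to it gives `(-1) ^ (x_{k₁} + ⋯ + x_{k_r}) = (-1) ^ b`,
hence `x_{k₁} + ⋯ + x_{k_r} = b` in `ℤ₂`.
-/

section SignCharacter

variable {R : Type*} [Ring R]

lemma neg_one_pow_val_add (a b : ZMod 2) :
    (-1 : R) ^ (a + b).val = (-1) ^ a.val * (-1) ^ b.val := by
  rw [ZMod.val_add, ← neg_one_pow_eq_pow_mod_two, pow_add]

lemma List.prod_map_neg_one_pow_val {ι : Type*} (x : ι → ZMod 2) (l : List ι) :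
    (l.map fun i => (-1 : R) ^ (x i).val).prod = (-1) ^ (l.map x).sum.val := by
  induction l with
  | nil => simp
  | cons i l ih =>
    rw [List.map_cons, List.prod_cons, ih, List.map_cons, List.sum_cons, neg_one_pow_val_add]

lemma neg_one_pow_val_injective (h : (-1 : R) ≠ 1) :
    Function.Injective fun a : ZMod 2 => (-1 : R) ^ a.val := by
  have h01 : ∀ a : ZMod 2, a = 0 ∨ a = 1 := by decide
  intro a b hab
  rcases h01 a with rfl | rfl <;> rcases h01 b with rfl | rfl <;> simp [ZMod.val_one] at hab ⊢
  exacts [h hab.symm, h hab]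

end SignCharacter

lemma sum_mul_eq_sum_map_filter_eq_one {n : ℕ} (a y : Fin n → ZMod 2) :
    ∑ i, a i * y i = (((List.finRange n).filter fun i => a i = 1).map y).sum := by
  have hmul : ∀ a y : ZMod 2, a * y = if a = 1 then y else 0 := by decide
  simp only [hmul, Fin.sum_univ_def, List.sum_map_ite, List.map_const', List.sum_replicate,
    smul_zero, add_zero]

lemma List.prod_map_smul_eq_smul {ι M R V : Type*} [Monoid M] [CommMonoid R] [MulAction M V]
    [MulAction R V] [SMulCommClass M R V] (T : ι → M) (c : ι → R) {w : V} (l : List ι)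
    (h : ∀ i ∈ l, T i • w = c i • w) : (l.map T).prod • w = (l.map c).prod • w := by
  induction l with
  | nil => simp
  | cons i l ih =>
    rw [List.map_cons, List.prod_cons, mul_smul, ih fun j hj => h j (List.mem_cons_of_mem i hj),
      smul_comm, h i List.mem_cons_self, smul_smul, List.map_cons, List.prod_cons, mul_comm]

section CommutingInvolutions

variable {R M V : Type*} [Ring R] [Monoid M] [AddCommGroup V] [Module R V]
  [DistribMulAction M V] [SMulCommClass M R V]

lemma exists_sign_eigenvector_of_mul_self_eq_one {T : M} (hT : T * T = 1) {w : V} (hw : w ≠ 0) :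
    ∃ v ≠ (0 : V), (∃ a : ZMod 2, T • v = (-1 : R) ^ a.val • v) ∧
      ∀ S : M, Commute S T → ∀ c : R, S • w = c • w → S • v = c • v := by
  by_cases hv : w + T • w = 0
  · refine ⟨w, hw, ⟨1, ?_⟩, fun _ _ _ h => h⟩
    rw [ZMod.val_one, pow_one, neg_one_smul, eq_neg_of_add_eq_zero_right hv]
  · refine ⟨w + T • w, hv, ⟨0, ?_⟩, fun S hST c hS => ?_⟩
    · rw [ZMod.val_zero, pow_zero, one_smul, smul_add, smul_smul, hT, one_smul, add_comm]
    · rw [smul_add, smul_smul, hST.eq, mul_smul, hS, smul_comm, smul_add]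

theorem exists_common_sign_eigenvector [Nontrivial V] {ι : Type*} (T : ι → M)
    (hinv : ∀ i, T i * T i = 1) (hcomm : ∀ i j, Commute (T i) (T j)) (s : Finset ι) :
    ∃ w ≠ (0 : V), ∀ i ∈ s, ∃ a : ZMod 2, T i • w = (-1 : R) ^ a.val • w := by
  induction s using Finset.cons_induction with
  | empty => simpa using exists_ne (0 : V)
  | cons i s _ ih =>
    obtain ⟨w, hw, hsign⟩ := ih
    obtain ⟨v, hv, hvi, hinherit⟩ :=
      exists_sign_eigenvector_of_mul_self_eq_one (R := R) (hinv i) hw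
    refine ⟨v, hv, (Finset.forall_mem_cons _ _).2 ⟨hvi, fun j hj => ?_⟩⟩
    obtain ⟨a, ha⟩ := hsign j hj
    exact ⟨a, hinherit (T j) (hcomm j i) _ ha⟩

end CommutingInvolutions

/-- If a linear system over `ℤ₂` has a quantum solution by pairwise commuting operators on a
nonzero Hilbert space, then it has a classical solution. -/
theorem commuting_quantum_solution_gives_classical_solution
    {H : Type*} [NormedAddCommGroup H] [InnerProductSpace ℂ H] [CompleteSpace H]
    [Nontrivial H] {m n : ℕ} (M : Fin m → Fin n → ZMod 2) (b : Fin m → ZMod 2)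
    (A : Fin n → (H →L[ℂ] H)) (hA : IsQuantumSolution M b A)
    (hcomm : ∀ i j, A i * A j = A j * A i) :
    ∃ x : Fin n → ZMod 2, ∀ r, ∑ i, M r i * x i = b r := by
  obtain ⟨-, hinv, -, hprod⟩ := hA
  obtain ⟨w, hw, hsign⟩ := exists_common_sign_eigenvector (R := ℂ) (V := H) A hinv hcomm .univ
  choose x hx using fun i => hsign i (Finset.mem_univ i)
  refine ⟨x, fun r => ?_⟩
  set l := (List.finRange n).filter fun i => M r i = 1
  have hw_eigen : (-1 : ℂ) ^ (b r).val • w = (-1 : ℂ) ^ (l.map x).sum.val • w := by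
    rw [← List.prod_map_neg_one_pow_val,
      ← List.prod_map_smul_eq_smul A (fun i => (-1 : ℂ) ^ (x i).val) l fun i _ => hx i,
      hprod r, ContinuousLinearMap.smul_def, smul_apply, one_apply_eq_self]
  have hsum : (l.map x).sum = b r :=
    neg_one_pow_val_injective (by norm_num) (smul_left_injective ℂ hw hw_eigen.symm)
  rw [sum_mul_eq_sum_map_filter_eq_one, hsum]
end

section
/- Let H = (V, E) be a hypergraph (V finite, E a set of subsets of V covering V). If H has a quantum representation on some nonzero complex Hilbert space, and additionally all assigned projections pairwise commute, then H admits a {0,1}-valued representation: a function p : V → {0,1} with ∑_{v ∈ e} p(v) = 1 for every e ∈ E. -/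
/-!
Pairwise commuting idempotents have a common eigenvector `x ≠ 0`, on which each of them acts
by `0` or `1`: refine a nonzero vector one idempotent at a time, replacing `x` by `P x` unless
`P x = 0`. Applying an edge relation `∑ v ∈ e, P v = 1` to `x` then counts exactly one `1`
on every edge.
-/

section CommonEigenvector

variable {ι A M : Type*}

theorem exists_ne_zero_forall_smul_eq_self_or_eq_zero [Monoid A] [AddMonoid M]
    [DistribMulAction A M] [Nontrivial M] {e : ι → A} (hidem : ∀ i, IsIdempotentElem (e i))
    (hcomm : ∀ i j, Commute (e i) (e j)) (s : Finset ι) :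
    ∃ x : M, x ≠ 0 ∧ ∀ i ∈ s, e i • x = x ∨ e i • x = 0 := by
  classical
  induction s using Finset.induction_on with
  | empty =>
    obtain ⟨x, hx⟩ := exists_ne (0 : M)
    exact ⟨x, hx, by simp⟩
  | insert j s _ ih =>
    obtain ⟨x, hx, hxs⟩ := ih
    by_cases hjx : e j • x = 0
    · exact ⟨x, hx, Finset.forall_mem_insert _ _ _ |>.2 ⟨Or.inr hjx, hxs⟩⟩
    refine ⟨e j • x, hjx, Finset.forall_mem_insert _ _ _ |>.2 ⟨Or.inl ?_, fun i hi => ?_⟩⟩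
    · rw [smul_smul, (hidem j).eq]
    · have hswap : e i • e j • x = e j • e i • x := by
        rw [smul_smul, smul_smul, (hcomm i j).eq]
      rcases hxs i hi with h | h <;> simp [hswap, h]

theorem sum_eq_one_of_sum_eq_one_of_smul_eq_smul {R : Type*} [Semiring A] [Ring R]
    [AddCommGroup M] [Module A M] [Module R M] [IsCancelMulZero R]
    [Module.IsTorsionFree R M] {e : ι → A} {c : ι → R} {s : Finset ι}
    (hsum : ∑ i ∈ s, e i = 1) {x : M} (hx : x ≠ 0)
    (heig : ∀ i ∈ s, e i • x = c i • x) : ∑ i ∈ s, c i = 1 := by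
  apply smul_left_injective R hx
  calc (∑ i ∈ s, c i) • x = (∑ i ∈ s, e i) • x := by
        simp only [Finset.sum_smul]; exact Finset.sum_congr rfl fun i hi => (heig i hi).symm
    _ = (1 : R) • x := by rw [hsum, one_smul, one_smul]

end CommonEigenvector

open ContinuousLinearMap in
theorem commuting_quantum_representation_gives_classical_general
    {V : Type*} (E : Finset (Finset V))
    (𝓗 : Type*) [NormedAddCommGroup 𝓗] [InnerProductSpace ℂ 𝓗]
    [Nontrivial 𝓗]
    (P : V → (𝓗 →L[ℂ] 𝓗))
    (hidem : ∀ v, P v * P v = P v)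
    (hedge : ∀ e ∈ E, ∑ v ∈ e, P v = 1)
    (hcomm : ∀ v w, P v * P w = P w * P v) :
    ∃ p : V → ℕ, (∀ v, p v = 0 ∨ p v = 1) ∧ ∀ e ∈ E, ∑ v ∈ e, p v = 1 := by
  classical
  obtain ⟨x, hx, hdich⟩ :=
    exists_ne_zero_forall_smul_eq_self_or_eq_zero (M := 𝓗) hidem hcomm (E.biUnion id)
  refine ⟨fun v => if P v x = x then 1 else 0, fun v => by by_cases h : P v x = x <;> simp [h],
    fun e he => ?_⟩
  have heig : ∀ v ∈ e, P v • x = ((if P v x = x then 1 else 0 : ℕ) : ℂ) • x := by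
    intro v hv
    rcases hdich v (Finset.mem_biUnion.2 ⟨e, he, hv⟩) with h | h <;>
      simp_all [ContinuousLinearMap.smul_def]
  exact_mod_cast sum_eq_one_of_sum_eq_one_of_smul_eq_smul (hedge e he) hx heig

open ContinuousLinearMap in
/-- If a hypergraph `(V, E)` (with `E` covering `V`) has a quantum representation by
pairwise commuting projections on a nonzero complex Hilbert space, then it has a classical
`{0,1}`-valued representation. -/
theorem commuting_quantum_representation_gives_classical
    {V : Type*} [Fintype V] [DecidableEq V] (E : Finset (Finset V))
    (hcover : ∀ v : V, ∃ e ∈ E, v ∈ e)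
    (𝓗 : Type*) [NormedAddCommGroup 𝓗] [InnerProductSpace ℂ 𝓗] [CompleteSpace 𝓗]
    [Nontrivial 𝓗]
    (P : V → (𝓗 →L[ℂ] 𝓗))
    (hsa : ∀ v, adjoint (P v) = P v)
    (hidem : ∀ v, P v * P v = P v)
    (hedge : ∀ e ∈ E, ∑ v ∈ e, P v = 1)
    (hcomm : ∀ v w, P v * P w = P w * P v) :
    ∃ p : V → ℕ, (∀ v, p v = 0 ∨ p v = 1) ∧ ∀ e ∈ E, ∑ v ∈ e, p v = 1 :=
  commuting_quantum_representation_gives_classical_general E 𝓗 P hidem hedge hcomm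
end
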